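/- For every alternating LTL formula γ, the equivalence G γ ≡ γ holds, i.e., for every alphabet Σ and every infinite word w ∈ Σ^ω, w ⊨ Gγ if and only if w ⊨ γ. -/
import Mathlib


/-- Syntax of LTL formulae over atomic propositions `AP`. -/
inductive LTL (AP : Type) : Type
  | tt    : LTL AP
  | atom  : AP → LTL AP
  | not   : LTL AP → LTL AP
  | or    : LTL AP → LTL AP → LTL AP
  | and   : LTL AP → LTL AP → LTL AP
  | next  : LTL AP → LTL AP
  | untl  : LTL AP → LTL AP → LTL AP

namespace LTL

/-- Derived operator `F` (eventually). -/
def F {AP : Type} (φ : LTL AP) : LTL AP := untl tt φ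

/-- Derived operator `G` (always). -/
def G {AP : Type} (φ : LTL AP) : LTL AP := not (F (not φ))

/-- Derived operator `R` (release). -/
def R {AP : Type} (φ ψ : LTL AP) : LTL AP := not (untl (not φ) (not ψ))

end LTL

/-- The `k`-th suffix of an infinite word. -/
def suffix {AP : Type} (w : ℕ → Set AP) (k : ℕ) : ℕ → Set AP :=
  fun i => w (i + k)

/-- Concatenation of a finite word `u` with an infinite word `w`. -/
def cat {AP : Type} (u : List (Set AP)) (w : ℕ → Set AP) : ℕ → Set AP :=
  fun i => if h : i < u.length then u.get ⟨i, h⟩ else w (i - u.length)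

/-- Satisfaction relation `w ⊨ φ` of LTL over infinite words `w : ℕ → Set AP`. -/
def Sat {AP : Type} : LTL AP → (ℕ → Set AP) → Prop
  | .tt, _ => True
  | .atom a, w => a ∈ w 0
  | .not φ, w => ¬ Sat φ w
  | .or φ ψ, w => Sat φ w ∨ Sat ψ w
  | .and φ ψ, w => Sat φ w ∧ Sat ψ w
  | .next φ, w => Sat φ (suffix w 1)
  | .untl φ ψ, w => ∃ i, Sat ψ (suffix w i) ∧ ∀ j < i, Sat φ (suffix w j)

/-- Pure eventuality formulae: μ ::= Fφ | μ∨μ | μ∧μ | Xμ | φUμ | μRμ | Gμ. -/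
inductive PureEventuality {AP : Type} : LTL AP → Prop
  | fin (φ : LTL AP) : PureEventuality (LTL.F φ)
  | or {μ₁ μ₂ : LTL AP} : PureEventuality μ₁ → PureEventuality μ₂ →
      PureEventuality (LTL.or μ₁ μ₂)
  | and {μ₁ μ₂ : LTL AP} : PureEventuality μ₁ → PureEventuality μ₂ →
      PureEventuality (LTL.and μ₁ μ₂)
  | next {μ : LTL AP} : PureEventuality μ → PureEventuality (LTL.next μ)
  | untl (φ : LTL AP) {μ : LTL AP} : PureEventuality μ →
      PureEventuality (LTL.untl φ μ)
  | rel {μ₁ μ₂ : LTL AP} : PureEventuality μ₁ → PureEventuality μ₂ →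
      PureEventuality (LTL.R μ₁ μ₂)
  | glob {μ : LTL AP} : PureEventuality μ → PureEventuality (LTL.G μ)

/-- Pure universality formulae: ν ::= Gφ | ν∨ν | ν∧ν | Xν | νUν | φRν | Fν. -/
inductive PureUniversality {AP : Type} : LTL AP → Prop
  | glob (φ : LTL AP) : PureUniversality (LTL.G φ)
  | or {ν₁ ν₂ : LTL AP} : PureUniversality ν₁ → PureUniversality ν₂ →
      PureUniversality (LTL.or ν₁ ν₂)
  | and {ν₁ ν₂ : LTL AP} : PureUniversality ν₁ → PureUniversality ν₂ →
      PureUniversality (LTL.and ν₁ ν₂)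
  | next {ν : LTL AP} : PureUniversality ν → PureUniversality (LTL.next ν)
  | untl {ν₁ ν₂ : LTL AP} : PureUniversality ν₁ → PureUniversality ν₂ →
      PureUniversality (LTL.untl ν₁ ν₂)
  | rel (φ : LTL AP) {ν : LTL AP} : PureUniversality ν →
      PureUniversality (LTL.R φ ν)
  | fin {ν : LTL AP} : PureUniversality ν → PureUniversality (LTL.F ν)

/-- Alternating formulae: ξ ::= Gμ | Fν | ξ∨ξ | ξ∧ξ | Xξ | φUξ | φRξ | Fξ | Gξ. -/
inductive Alternating {AP : Type} : LTL AP → Prop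
  | globEv {μ : LTL AP} : PureEventuality μ → Alternating (LTL.G μ)
  | finUniv {ν : LTL AP} : PureUniversality ν → Alternating (LTL.F ν)
  | or {ξ₁ ξ₂ : LTL AP} : Alternating ξ₁ → Alternating ξ₂ →
      Alternating (LTL.or ξ₁ ξ₂)
  | and {ξ₁ ξ₂ : LTL AP} : Alternating ξ₁ → Alternating ξ₂ →
      Alternating (LTL.and ξ₁ ξ₂)
  | next {ξ : LTL AP} : Alternating ξ → Alternating (LTL.next ξ)
  | untl (φ : LTL AP) {ξ : LTL AP} : Alternating ξ → Alternating (LTL.untl φ ξ)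
  | rel (φ : LTL AP) {ξ : LTL AP} : Alternating ξ → Alternating (LTL.R φ ξ)
  | fin {ξ : LTL AP} : Alternating ξ → Alternating (LTL.F ξ)
  | glob {ξ : LTL AP} : Alternating ξ → Alternating (LTL.G ξ)

section Aux

variable {AP : Type}

lemma suffix_zero (w : ℕ → Set AP) : suffix w 0 = w := rfl

lemma suffix_suffix (w : ℕ → Set AP) (a b : ℕ) :
    suffix (suffix w a) b = suffix w (b + a) := by
  funext i
  show w (i + b + a) = w (i + (b + a))
  rw [Nat.add_assoc]

lemma suffix_eq_of_eq (w : ℕ → Set AP) {a b : ℕ} (h : a = b) :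
    suffix w a = suffix w b := by rw [h]

lemma sat_F {φ : LTL AP} {w : ℕ → Set AP} :
    Sat (LTL.F φ) w ↔ ∃ k, Sat φ (suffix w k) := by
  simp [LTL.F, Sat]

lemma sat_G {φ : LTL AP} {w : ℕ → Set AP} :
    Sat (LTL.G φ) w ↔ ∀ k, Sat φ (suffix w k) := by
  simp [LTL.G, LTL.F, Sat]

lemma sat_R {φ ψ : LTL AP} {w : ℕ → Set AP} :
    Sat (LTL.R φ ψ) w ↔
      ∀ j, (∀ j' < j, ¬ Sat φ (suffix w j')) → Sat ψ (suffix w j) := by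
  classical
  simp only [LTL.R, Sat, not_exists]
  constructor
  · intro h j hg
    by_contra hψ
    exact h j ⟨hψ, hg⟩
  · intro h j hj
    exact hj.1 (h j hj.2)

lemma PE_mono {μ : LTL AP} (h : PureEventuality μ) :
    ∀ (w : ℕ → Set AP) (i : ℕ), Sat μ (suffix w i) → Sat μ w := by
  induction h with
  | fin φ =>
      intro w i h
      rw [sat_F] at h ⊢
      obtain ⟨k, hk⟩ := h
      rw [suffix_suffix] at hk
      exact ⟨k + i, hk⟩
  | or h1 h2 ih1 ih2 =>
      intro w i h
      rcases h with h | h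
      · exact Or.inl (ih1 w i h)
      · exact Or.inr (ih2 w i h)
  | and h1 h2 ih1 ih2 =>
      intro w i h
      exact ⟨ih1 w i h.1, ih2 w i h.2⟩
  | next h ih =>
      intro w i h'
      have h'' : Sat _ (suffix (suffix w i) 1) := h'
      rw [suffix_suffix] at h''
      show Sat _ (suffix w 1)
      apply ih (suffix w 1) i
      rw [suffix_suffix, suffix_eq_of_eq w (Nat.add_comm i 1)]
      exact h''
  | untl φ h ih =>
      intro w i h'
      obtain ⟨k, hk, _⟩ := h'
      rw [suffix_suffix] at hk
      have : Sat _ w := ih w (k + i) hk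
      exact ⟨0, by rwa [suffix_zero], fun j hj => absurd hj (Nat.not_lt_zero j)⟩
  | rel h1 h2 ih1 ih2 =>
      rename_i μ₁ μ₂
      intro w i h
      rw [sat_R] at h ⊢
      intro j hg
      have key : Sat μ₂ (suffix (suffix w i) j) := by
        apply h j
        intro j' hj'
        rw [suffix_suffix]
        intro hcon
        exact hg 0 (Nat.lt_of_le_of_lt (Nat.zero_le j') hj')
          (ih1 (suffix w 0) (j' + i) (by rwa [suffix_suffix, Nat.add_zero]))
      rw [suffix_suffix] at key
      apply ih2 (suffix w j) i
      rwa [suffix_suffix, suffix_eq_of_eq w (Nat.add_comm i j)]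
  | glob h ih =>
      intro w i h'
      rw [sat_G] at h' ⊢
      intro k
      apply ih (suffix w k) i
      rw [suffix_suffix, suffix_eq_of_eq w (Nat.add_comm i k)]
      have := h' k
      rwa [suffix_suffix] at this

lemma PU_mono {ν : LTL AP} (h : PureUniversality ν) :
    ∀ (w : ℕ → Set AP) (i : ℕ), Sat ν w → Sat ν (suffix w i) := by
  induction h with
  | glob φ =>
      intro w i h
      rw [sat_G] at h ⊢
      intro k
      rw [suffix_suffix]
      exact h (k + i)
  | or h1 h2 ih1 ih2 =>
      intro w i h
      rcases h with h | h
      · exact Or.inl (ih1 w i h)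
      · exact Or.inr (ih2 w i h)
  | and h1 h2 ih1 ih2 =>
      intro w i h
      exact ⟨ih1 w i h.1, ih2 w i h.2⟩
  | next h ih =>
      intro w i h'
      show Sat _ (suffix (suffix w i) 1)
      rw [suffix_suffix, ← Nat.add_comm i 1, ← suffix_suffix]
      exact ih (suffix w 1) i h'
  | untl h1 h2 ih1 ih2 =>
      intro w i h
      obtain ⟨j, hj, hg⟩ := h
      refine ⟨j, ?_, ?_⟩
      · rw [suffix_suffix]
        have := ih2 (suffix w j) i hj
        rwa [suffix_suffix, suffix_eq_of_eq w (Nat.add_comm i j)] at this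
      · intro j' hj'
        rw [suffix_suffix]
        have h0 : Sat _ (suffix w 0) := hg 0 (Nat.lt_of_le_of_lt (Nat.zero_le j') hj')
        have := ih1 (suffix w 0) (j' + i) h0
        rwa [suffix_suffix, Nat.add_zero] at this
  | rel φ h ih =>
      intro w i h'
      rw [sat_R] at h' ⊢
      intro j hg
      by_cases hc : ∀ k < i, ¬ Sat φ (suffix w k)
      · rw [suffix_suffix]
        apply h' (j + i)
        intro j' hj'
        by_cases hji : j' < i
        · exact hc j' hji
        · have : j' - i < j := by omega
          have := hg (j' - i) this
          rwa [suffix_suffix, suffix_eq_of_eq w (show j' - i + i = j' by omega)] at this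
      · push_neg at hc
        have hex : ∃ m, Sat φ (suffix w m) := ⟨hc.choose, hc.choose_spec.2⟩
        classical
        let m := Nat.find hex
        have hm : Sat φ (suffix w m) := Nat.find_spec hex
        have hmin : ∀ k < m, ¬ Sat φ (suffix w k) := fun k hk => Nat.find_min hex hk
        have hmi : m < i := Nat.lt_of_le_of_lt (Nat.find_min' hex hc.choose_spec.2) hc.choose_spec.1
        have hν : Sat _ (suffix w m) := h' m hmin
        have := ih (suffix w m) (j + i - m) hν
        rw [suffix_suffix, suffix_eq_of_eq w (show j + i - m + m = j + i by omega)] at this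
        rwa [suffix_suffix]
  | fin h ih =>
      intro w i h'
      rw [sat_F] at h' ⊢
      obtain ⟨k, hk⟩ := h'
      refine ⟨k, ?_⟩
      rw [suffix_suffix]
      have := ih (suffix w k) i hk
      rwa [suffix_suffix, suffix_eq_of_eq w (Nat.add_comm i k)] at this

lemma alt_inv {ξ : LTL AP} (h : Alternating ξ) :
    ∀ (w : ℕ → Set AP) (i : ℕ), Sat ξ w ↔ Sat ξ (suffix w i) := by
  induction h with
  | globEv hμ =>
      intro w i
      rw [sat_G, sat_G]
      constructor
      · intro h k
        rw [suffix_suffix]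
        exact h (k + i)
      · intro h k
        apply PE_mono hμ (suffix w k) i
        rw [suffix_suffix, suffix_eq_of_eq w (Nat.add_comm i k)]
        have := h k
        rwa [suffix_suffix] at this
  | finUniv hν =>
      intro w i
      rw [sat_F, sat_F]
      constructor
      · intro h
        obtain ⟨k, hk⟩ := h
        refine ⟨k, ?_⟩
        rw [suffix_suffix]
        have := PU_mono hν (suffix w k) i hk
        rwa [suffix_suffix, suffix_eq_of_eq w (Nat.add_comm i k)] at this
      · intro h
        obtain ⟨k, hk⟩ := h
        rw [suffix_suffix] at hk
        exact ⟨k + i, hk⟩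
  | or h1 h2 ih1 ih2 =>
      intro w i
      exact or_congr (ih1 w i) (ih2 w i)
  | and h1 h2 ih1 ih2 =>
      intro w i
      exact and_congr (ih1 w i) (ih2 w i)
  | next h ih =>
      intro w i
      show Sat _ (suffix w 1) ↔ Sat _ (suffix (suffix w i) 1)
      rw [suffix_suffix, ← Nat.add_comm i 1, ← suffix_suffix]
      exact ih (suffix w 1) i
  | untl φ h ih =>
      rename_i ξ'
      intro w i
      have key : ∀ (v : ℕ → Set AP), Sat (LTL.untl φ ξ') v ↔ Sat ξ' v := by
        intro v
        constructor
        · intro hs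
          obtain ⟨k, hk, _⟩ := hs
          exact (ih v k).mpr hk
        · intro hs
          exact ⟨0, by rwa [suffix_zero], fun j hj => absurd hj (Nat.not_lt_zero j)⟩
      rw [key w, key (suffix w i)]
      exact ih w i
  | rel φ h ih =>
      rename_i ξ'
      intro w i
      have key : ∀ (v : ℕ → Set AP), Sat (LTL.R φ ξ') v ↔ Sat ξ' v := by
        intro v
        rw [sat_R]
        constructor
        · intro hs
          have := hs 0 (fun j' hj' => absurd hj' (Nat.not_lt_zero j'))
          rwa [suffix_zero] at this
        · intro hs j _
          exact (ih v j).mp hs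
      rw [key w, key (suffix w i)]
      exact ih w i
  | fin h ih =>
      rename_i ξ'
      intro w i
      have key : ∀ (v : ℕ → Set AP), Sat (LTL.F ξ') v ↔ Sat ξ' v := by
        intro v
        rw [sat_F]
        constructor
        · intro hs
          obtain ⟨k, hk⟩ := hs
          exact (ih v k).mpr hk
        · intro hs
          exact ⟨0, by rwa [suffix_zero]⟩
      rw [key w, key (suffix w i)]
      exact ih w i
  | glob h ih =>
      rename_i ξ'
      intro w i
      have key : ∀ (v : ℕ → Set AP), Sat (LTL.G ξ') v ↔ Sat ξ' v := by
        intro v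
        rw [sat_G]
        constructor
        · intro hs
          have := hs 0
          rwa [suffix_zero] at this
        · intro hs k
          exact (ih v k).mp hs
      rw [key w, key (suffix w i)]
      exact ih w i

end Aux

theorem always_alternating_equiv :
    ∀ (AP : Type) (γ : LTL AP), Alternating γ →
      ∀ (w : ℕ → Set AP), Sat (LTL.G γ) w ↔ Sat γ w := by
  intro AP γ hγ w
  rw [sat_G]
  constructor
  · intro h
    have := h 0
    rwa [suffix_zero] at this
  · intro h k
    exact (alt_inv hγ w k).mp h
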